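/- arXiv:2010.09117 — 4 statements merged into one kernel-verified Lean document; each statement's English description precedes it below -/
import Mathlib

section
/- Let b, c : ℝ × ℝ → ℝ be smooth real-valued functions of (α, t). For smooth functions F(α, β, t) on ℝ² × ℝ define the operators 𝔇ₜF = ∂ₜF + b(α,t)·∂_αF + b(β,t)·∂_βF and 𝒫F = 𝔇ₜ(𝔇ₜF) + i·c(α,t)·∂_αF + i·c(β,t)·∂_βF. Then for all smooth g, h, q : ℝ² × ℝ → ℂ one has, pointwise on ℝ² × ℝ, the identity 𝒫(g · h̄ · q) = 2·𝔇ₜ(g·h̄)·𝔇ₜq + 2·𝔇ₜ(g·𝔇ₜh̄)·q + h̄·q·𝒫g + g·h̄·𝒫q − g·q·conj(𝒫h), where h̄ denotes the pointwise complex conjugate of h and conj(𝒫h) the pointwise complex conjugate of 𝒫h. -/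
/-- Partial derivative in the first (α) variable of a function of (α, β, t). -/
noncomputable def pA (F : ℝ → ℝ → ℝ → ℂ) : ℝ → ℝ → ℝ → ℂ :=
  fun α β t => deriv (fun x => F x β t) α

/-- Partial derivative in the second (β) variable of a function of (α, β, t). -/
noncomputable def pB (F : ℝ → ℝ → ℝ → ℂ) : ℝ → ℝ → ℝ → ℂ :=
  fun α β t => deriv (fun y => F α y t) β

/-- Partial derivative in the time variable of a function of (α, β, t). -/
noncomputable def pT (F : ℝ → ℝ → ℝ → ℂ) : ℝ → ℝ → ℝ → ℂ :=
  fun α β t => deriv (fun s => F α β s) t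

/-- Two-point material derivative `𝔇ₜF = ∂ₜF + b(α,t)∂_αF + b(β,t)∂_βF`. -/
noncomputable def matD (b : ℝ → ℝ → ℝ) (F : ℝ → ℝ → ℝ → ℂ) : ℝ → ℝ → ℝ → ℂ :=
  fun α β t => pT F α β t + (b α t : ℂ) * pA F α β t + (b β t : ℂ) * pB F α β t

/-- The operator `𝒫F = 𝔇ₜ(𝔇ₜF) + i·c(α,t)∂_αF + i·c(β,t)∂_βF`. -/
noncomputable def calP (b c : ℝ → ℝ → ℝ) (F : ℝ → ℝ → ℝ → ℂ) : ℝ → ℝ → ℝ → ℂ :=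
  fun α β t => matD b (matD b F) α β t + Complex.I * (c α t : ℂ) * pA F α β t
    + Complex.I * (c β t : ℂ) * pB F α β t

/-- Pointwise complex conjugate of a function of (α, β, t). -/
noncomputable def cconj (h : ℝ → ℝ → ℝ → ℂ) : ℝ → ℝ → ℝ → ℂ :=
  fun α β t => (starRingEnd ℂ) (h α β t)

/-! ### Auxiliary lemmas -/

/-- Smoothness of a function of three real variables, in uncurried form. -/
abbrev Sm (F : ℝ → ℝ → ℝ → ℂ) : Prop :=
  ContDiff ℝ (⊤ : ℕ∞) (fun p : ℝ × ℝ × ℝ => F p.1 p.2.1 p.2.2)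

lemma diffSliceA (F : ℝ → ℝ → ℝ → ℂ) (hF : Sm F) (α β t : ℝ) :
    DifferentiableAt ℝ (fun x => F x β t) α := by
  have h1 : DifferentiableAt ℝ (fun p : ℝ × ℝ × ℝ => F p.1 p.2.1 p.2.2) (α, β, t) :=
    (hF.differentiable (by simp)).differentiableAt
  exact h1.comp (f := fun x : ℝ => ((x, β, t) : ℝ × ℝ × ℝ)) α (differentiableAt_fun_id.prodMk (differentiableAt_const (β, t)))

lemma diffSliceB (F : ℝ → ℝ → ℝ → ℂ) (hF : Sm F) (α β t : ℝ) :
    DifferentiableAt ℝ (fun y => F α y t) β := by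
  have h1 : DifferentiableAt ℝ (fun p : ℝ × ℝ × ℝ => F p.1 p.2.1 p.2.2) (α, β, t) :=
    (hF.differentiable (by simp)).differentiableAt
  exact h1.comp (f := fun y : ℝ => ((α, y, t) : ℝ × ℝ × ℝ)) β ((differentiableAt_const α).prodMk
    (differentiableAt_fun_id.prodMk (differentiableAt_const t)))

lemma diffSliceT (F : ℝ → ℝ → ℝ → ℂ) (hF : Sm F) (α β t : ℝ) :
    DifferentiableAt ℝ (fun s => F α β s) t := by
  have h1 : DifferentiableAt ℝ (fun p : ℝ × ℝ × ℝ => F p.1 p.2.1 p.2.2) (α, β, t) :=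
    (hF.differentiable (by simp)).differentiableAt
  exact h1.comp (f := fun s : ℝ => ((α, β, s) : ℝ × ℝ × ℝ)) t ((differentiableAt_const α).prodMk
    ((differentiableAt_const β).prodMk differentiableAt_fun_id))

lemma pA_eq_fderiv (F : ℝ → ℝ → ℝ → ℂ) (hF : Sm F) (α β t : ℝ) :
    pA F α β t = fderiv ℝ (fun p : ℝ × ℝ × ℝ => F p.1 p.2.1 p.2.2) (α, β, t) (1, 0, 0) := by
  have h2 : HasDerivAt (fun x : ℝ => ((x, β, t) : ℝ × ℝ × ℝ)) ((1 : ℝ), (0 : ℝ), (0 : ℝ)) α :=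
    (hasDerivAt_id α).prodMk (hasDerivAt_const α ((β, t) : ℝ × ℝ))
  have h3 := (((hF.differentiable (by simp)) (α, β, t)).hasFDerivAt).comp_hasDerivAt α h2
  have h4 : HasDerivAt (fun x => F x β t)
      ((fderiv ℝ (fun p : ℝ × ℝ × ℝ => F p.1 p.2.1 p.2.2) (α, β, t)) (1, 0, 0)) α := h3
  simpa [pA] using h4.deriv

lemma pB_eq_fderiv (F : ℝ → ℝ → ℝ → ℂ) (hF : Sm F) (α β t : ℝ) :
    pB F α β t = fderiv ℝ (fun p : ℝ × ℝ × ℝ => F p.1 p.2.1 p.2.2) (α, β, t) (0, 1, 0) := by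
  have h2 : HasDerivAt (fun y : ℝ => ((α, y, t) : ℝ × ℝ × ℝ)) ((0 : ℝ), (1 : ℝ), (0 : ℝ)) β :=
    (hasDerivAt_const β α).prodMk ((hasDerivAt_id β).prodMk (hasDerivAt_const β t))
  have h3 := (((hF.differentiable (by simp)) (α, β, t)).hasFDerivAt).comp_hasDerivAt β h2
  have h4 : HasDerivAt (fun y => F α y t)
      ((fderiv ℝ (fun p : ℝ × ℝ × ℝ => F p.1 p.2.1 p.2.2) (α, β, t)) (0, 1, 0)) β := h3
  simpa [pB] using h4.deriv

lemma pT_eq_fderiv (F : ℝ → ℝ → ℝ → ℂ) (hF : Sm F) (α β t : ℝ) :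
    pT F α β t = fderiv ℝ (fun p : ℝ × ℝ × ℝ => F p.1 p.2.1 p.2.2) (α, β, t) (0, 0, 1) := by
  have h2 : HasDerivAt (fun s : ℝ => ((α, β, s) : ℝ × ℝ × ℝ)) ((0 : ℝ), (0 : ℝ), (1 : ℝ)) t :=
    (hasDerivAt_const t α).prodMk ((hasDerivAt_const t β).prodMk (hasDerivAt_id t))
  have h3 := (((hF.differentiable (by simp)) (α, β, t)).hasFDerivAt).comp_hasDerivAt t h2
  have h4 : HasDerivAt (fun s => F α β s)
      ((fderiv ℝ (fun p : ℝ × ℝ × ℝ => F p.1 p.2.1 p.2.2) (α, β, t)) (0, 0, 1)) t := h3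
  simpa [pT] using h4.deriv

lemma sm_pA (F : ℝ → ℝ → ℝ → ℂ) (hF : Sm F) : Sm (pA F) := by
  have e : (fun p : ℝ × ℝ × ℝ => pA F p.1 p.2.1 p.2.2)
      = fun p : ℝ × ℝ × ℝ => fderiv ℝ (fun p : ℝ × ℝ × ℝ => F p.1 p.2.1 p.2.2) p
          (((1 : ℝ), (0 : ℝ), (0 : ℝ)) : ℝ × ℝ × ℝ) := by
    funext p; exact pA_eq_fderiv F hF p.1 p.2.1 p.2.2
  show ContDiff ℝ (⊤ : ℕ∞) _
  rw [e]
  exact (hF.fderiv_right (by simp)).clm_apply contDiff_const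

lemma sm_pB (F : ℝ → ℝ → ℝ → ℂ) (hF : Sm F) : Sm (pB F) := by
  have e : (fun p : ℝ × ℝ × ℝ => pB F p.1 p.2.1 p.2.2)
      = fun p : ℝ × ℝ × ℝ => fderiv ℝ (fun p : ℝ × ℝ × ℝ => F p.1 p.2.1 p.2.2) p
          (((0 : ℝ), (1 : ℝ), (0 : ℝ)) : ℝ × ℝ × ℝ) := by
    funext p; exact pB_eq_fderiv F hF p.1 p.2.1 p.2.2
  show ContDiff ℝ (⊤ : ℕ∞) _
  rw [e]
  exact (hF.fderiv_right (by simp)).clm_apply contDiff_const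

lemma sm_pT (F : ℝ → ℝ → ℝ → ℂ) (hF : Sm F) : Sm (pT F) := by
  have e : (fun p : ℝ × ℝ × ℝ => pT F p.1 p.2.1 p.2.2)
      = fun p : ℝ × ℝ × ℝ => fderiv ℝ (fun p : ℝ × ℝ × ℝ => F p.1 p.2.1 p.2.2) p
          (((0 : ℝ), (0 : ℝ), (1 : ℝ)) : ℝ × ℝ × ℝ) := by
    funext p; exact pT_eq_fderiv F hF p.1 p.2.1 p.2.2
  show ContDiff ℝ (⊤ : ℕ∞) _
  rw [e]
  exact (hF.fderiv_right (by simp)).clm_apply contDiff_const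

lemma sm_mul (F G : ℝ → ℝ → ℝ → ℂ) (hF : Sm F) (hG : Sm G) :
    Sm (fun x y s => F x y s * G x y s) := hF.mul hG

lemma sm_cconj (h : ℝ → ℝ → ℝ → ℂ) (hh : Sm h) : Sm (cconj h) :=
  Complex.conjCLE.contDiff.comp hh

lemma sm_matD (b : ℝ → ℝ → ℝ) (hb : ContDiff ℝ (⊤ : ℕ∞) (fun p : ℝ × ℝ => b p.1 p.2))
    (F : ℝ → ℝ → ℝ → ℂ) (hF : Sm F) : Sm (matD b F) := by
  have hbA : ContDiff ℝ (⊤ : ℕ∞) (fun p : ℝ × ℝ × ℝ => ((b p.1 p.2.2 : ℝ) : ℂ)) :=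
    Complex.ofRealCLM.contDiff.comp (hb.comp (contDiff_fst.prodMk contDiff_snd.snd))
  have hbB : ContDiff ℝ (⊤ : ℕ∞) (fun p : ℝ × ℝ × ℝ => ((b p.2.1 p.2.2 : ℝ) : ℂ)) :=
    Complex.ofRealCLM.contDiff.comp (hb.comp (contDiff_snd.fst.prodMk contDiff_snd.snd))
  exact ((sm_pT F hF).add (hbA.mul (sm_pA F hF))).add (hbB.mul (sm_pB F hF))

lemma pA_mul (F G : ℝ → ℝ → ℝ → ℂ) (hF : Sm F) (hG : Sm G) (α β t : ℝ) :
    pA (fun x y s => F x y s * G x y s) α β t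
      = pA F α β t * G α β t + F α β t * pA G α β t :=
  deriv_mul (diffSliceA F hF α β t) (diffSliceA G hG α β t)

lemma pB_mul (F G : ℝ → ℝ → ℝ → ℂ) (hF : Sm F) (hG : Sm G) (α β t : ℝ) :
    pB (fun x y s => F x y s * G x y s) α β t
      = pB F α β t * G α β t + F α β t * pB G α β t :=
  deriv_mul (diffSliceB F hF α β t) (diffSliceB G hG α β t)

lemma pT_mul (F G : ℝ → ℝ → ℝ → ℂ) (hF : Sm F) (hG : Sm G) (α β t : ℝ) :
    pT (fun x y s => F x y s * G x y s) α β t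
      = pT F α β t * G α β t + F α β t * pT G α β t :=
  deriv_mul (diffSliceT F hF α β t) (diffSliceT G hG α β t)

lemma matD_mul (b : ℝ → ℝ → ℝ) (F G : ℝ → ℝ → ℝ → ℂ) (hF : Sm F) (hG : Sm G) (α β t : ℝ) :
    matD b (fun x y s => F x y s * G x y s) α β t
      = matD b F α β t * G α β t + F α β t * matD b G α β t := by
  simp only [matD, pA_mul F G hF hG, pB_mul F G hF hG, pT_mul F G hF hG]
  ring

lemma pA_add (F G : ℝ → ℝ → ℝ → ℂ) (hF : Sm F) (hG : Sm G) (α β t : ℝ) :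
    pA (fun x y s => F x y s + G x y s) α β t = pA F α β t + pA G α β t :=
  deriv_add (diffSliceA F hF α β t) (diffSliceA G hG α β t)

lemma pB_add (F G : ℝ → ℝ → ℝ → ℂ) (hF : Sm F) (hG : Sm G) (α β t : ℝ) :
    pB (fun x y s => F x y s + G x y s) α β t = pB F α β t + pB G α β t :=
  deriv_add (diffSliceB F hF α β t) (diffSliceB G hG α β t)

lemma pT_add (F G : ℝ → ℝ → ℝ → ℂ) (hF : Sm F) (hG : Sm G) (α β t : ℝ) :
    pT (fun x y s => F x y s + G x y s) α β t = pT F α β t + pT G α β t :=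
  deriv_add (diffSliceT F hF α β t) (diffSliceT G hG α β t)

lemma matD_add (b : ℝ → ℝ → ℝ) (F G : ℝ → ℝ → ℝ → ℂ) (hF : Sm F) (hG : Sm G) (α β t : ℝ) :
    matD b (fun x y s => F x y s + G x y s) α β t = matD b F α β t + matD b G α β t := by
  simp only [matD, pA_add F G hF hG, pB_add F G hF hG, pT_add F G hF hG]
  ring

lemma deriv_conj' (f : ℝ → ℂ) (x : ℝ) (hf : DifferentiableAt ℝ f x) :
    deriv (fun y => (starRingEnd ℂ) (f y)) x = (starRingEnd ℂ) (deriv f x) := by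
  have := Complex.conjCLE.hasFDerivAt.comp_hasDerivAt x hf.hasDerivAt
  simpa [Function.comp_def, Complex.conjCAE_apply] using this.deriv

lemma pA_conj (h : ℝ → ℝ → ℝ → ℂ) (hh : Sm h) (α β t : ℝ) :
    pA (cconj h) α β t = (starRingEnd ℂ) (pA h α β t) :=
  deriv_conj' (fun x => h x β t) α (diffSliceA h hh α β t)

lemma pB_conj (h : ℝ → ℝ → ℝ → ℂ) (hh : Sm h) (α β t : ℝ) :
    pB (cconj h) α β t = (starRingEnd ℂ) (pB h α β t) :=
  deriv_conj' (fun y => h α y t) β (diffSliceB h hh α β t)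

lemma pT_conj (h : ℝ → ℝ → ℝ → ℂ) (hh : Sm h) (α β t : ℝ) :
    pT (cconj h) α β t = (starRingEnd ℂ) (pT h α β t) :=
  deriv_conj' (fun s => h α β s) t (diffSliceT h hh α β t)

lemma matD_conj (b : ℝ → ℝ → ℝ) (h : ℝ → ℝ → ℝ → ℂ) (hh : Sm h) (α β t : ℝ) :
    matD b (cconj h) α β t = (starRingEnd ℂ) (matD b h α β t) := by
  simp only [matD, pA_conj h hh, pB_conj h hh, pT_conj h hh, map_add, map_mul,
    Complex.conj_ofReal]

/-- Product identity (Lemma 2.5 of the paper). -/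
theorem calP_product_identity
    (b c : ℝ → ℝ → ℝ)
    (hb : ContDiff ℝ (⊤ : ℕ∞) (fun p : ℝ × ℝ => b p.1 p.2))
    (hc : ContDiff ℝ (⊤ : ℕ∞) (fun p : ℝ × ℝ => c p.1 p.2))
    (g h q : ℝ → ℝ → ℝ → ℂ)
    (hg : ContDiff ℝ (⊤ : ℕ∞) (fun p : ℝ × ℝ × ℝ => g p.1 p.2.1 p.2.2))
    (hh : ContDiff ℝ (⊤ : ℕ∞) (fun p : ℝ × ℝ × ℝ => h p.1 p.2.1 p.2.2))
    (hq : ContDiff ℝ (⊤ : ℕ∞) (fun p : ℝ × ℝ × ℝ => q p.1 p.2.1 p.2.2))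
    (α β t : ℝ) :
    calP b c (fun x y s => g x y s * cconj h x y s * q x y s) α β t =
      2 * matD b (fun x y s => g x y s * cconj h x y s) α β t * matD b q α β t
        + 2 * matD b (fun x y s => g x y s * matD b (cconj h) x y s) α β t * q α β t
        + cconj h α β t * q α β t * calP b c g α β t
        + g α β t * cconj h α β t * calP b c q α β t
        - g α β t * q α β t * (starRingEnd ℂ) (calP b c h α β t) := by
  have sH : Sm (cconj h) := sm_cconj h hh
  have sGH : Sm (fun x y s => g x y s * cconj h x y s) := sm_mul _ _ hg sH
  have sDH : Sm (matD b (cconj h)) := sm_matD b hb _ sH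
  have sGDH : Sm (fun x y s => g x y s * matD b (cconj h) x y s) := sm_mul _ _ hg sDH
  have sDGH : Sm (matD b (fun x y s => g x y s * cconj h x y s)) := sm_matD b hb _ sGH
  have sDq : Sm (matD b q) := sm_matD b hb q hq
  have sDg : Sm (matD b g) := sm_matD b hb g hg
  have sDh : Sm (matD b h) := sm_matD b hb h hh
  -- function-level Leibniz for the triple product
  have FP : matD b (fun x y s => g x y s * cconj h x y s * q x y s)
      = fun x y s => matD b (fun x y s => g x y s * cconj h x y s) x y s * q x y s
          + g x y s * cconj h x y s * matD b q x y s := by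
    funext x y s
    exact matD_mul b (fun x y s => g x y s * cconj h x y s) q sGH hq x y s
  -- function-level Leibniz for g * conj h
  have FGH : matD b (fun x y s => g x y s * cconj h x y s)
      = fun x y s => matD b g x y s * cconj h x y s + g x y s * matD b (cconj h) x y s := by
    funext x y s
    exact matD_mul b g (cconj h) hg sH x y s
  -- function-level conjugation
  have FHc : matD b (cconj h) = cconj (matD b h) := by
    funext x y s
    exact matD_conj b h hh x y s
  -- expand the second material derivative of the triple product
  have e1 : matD b (matD b (fun x y s => g x y s * cconj h x y s * q x y s)) α β t
      = matD b (fun x y s => matD b (fun x y s => g x y s * cconj h x y s) x y s * q x y s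
          + g x y s * cconj h x y s * matD b q x y s) α β t := by rw [FP]
  have e2 : matD b (fun x y s => matD b (fun x y s => g x y s * cconj h x y s) x y s * q x y s
          + g x y s * cconj h x y s * matD b q x y s) α β t
      = matD b (fun x y s =>
            matD b (fun x y s => g x y s * cconj h x y s) x y s * q x y s) α β t
        + matD b (fun x y s => g x y s * cconj h x y s * matD b q x y s) α β t :=
    matD_add b _ _ (sm_mul _ _ sDGH hq) (sm_mul _ _ sGH sDq) α β t
  have e3 : matD b (fun x y s =>
        matD b (fun x y s => g x y s * cconj h x y s) x y s * q x y s) α β t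
      = matD b (matD b (fun x y s => g x y s * cconj h x y s)) α β t * q α β t
        + matD b (fun x y s => g x y s * cconj h x y s) α β t * matD b q α β t :=
    matD_mul b _ q sDGH hq α β t
  have e4 : matD b (fun x y s => g x y s * cconj h x y s * matD b q x y s) α β t
      = matD b (fun x y s => g x y s * cconj h x y s) α β t * matD b q α β t
        + g α β t * cconj h α β t * matD b (matD b q) α β t :=
    matD_mul b _ (matD b q) sGH sDq α β t
  -- expand matD² of g * conj h
  have e5a : matD b (matD b (fun x y s => g x y s * cconj h x y s)) α β t
      = matD b (fun x y s => matD b g x y s * cconj h x y s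
          + g x y s * matD b (cconj h) x y s) α β t := by rw [FGH]
  have e5b : matD b (fun x y s => matD b g x y s * cconj h x y s
          + g x y s * matD b (cconj h) x y s) α β t
      = matD b (fun x y s => matD b g x y s * cconj h x y s) α β t
        + matD b (fun x y s => g x y s * matD b (cconj h) x y s) α β t :=
    matD_add b _ _ (sm_mul _ _ sDg sH) sGDH α β t
  have e5c : matD b (fun x y s => matD b g x y s * cconj h x y s) α β t
      = matD b (matD b g) α β t * cconj h α β t
        + matD b g α β t * matD b (cconj h) α β t :=
    matD_mul b (matD b g) (cconj h) sDg sH α β t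
  have e6 : matD b (fun x y s => g x y s * cconj h x y s) α β t
      = matD b g α β t * cconj h α β t + g α β t * matD b (cconj h) α β t :=
    matD_mul b g (cconj h) hg sH α β t
  have e7 : matD b (fun x y s => g x y s * matD b (cconj h) x y s) α β t
      = matD b g α β t * matD b (cconj h) α β t
        + g α β t * matD b (matD b (cconj h)) α β t :=
    matD_mul b g (matD b (cconj h)) hg sDH α β t
  have e8 : matD b (matD b (cconj h)) α β t
      = (starRingEnd ℂ) (matD b (matD b h) α β t) := by
    rw [FHc]; exact matD_conj b (matD b h) sDh α β t
  -- first partials of the triple product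
  have p1 : pA (fun x y s => g x y s * cconj h x y s * q x y s) α β t
      = pA (fun x y s => g x y s * cconj h x y s) α β t * q α β t
        + g α β t * cconj h α β t * pA q α β t :=
    pA_mul _ q sGH hq α β t
  have p2 : pA (fun x y s => g x y s * cconj h x y s) α β t
      = pA g α β t * cconj h α β t + g α β t * pA (cconj h) α β t :=
    pA_mul g (cconj h) hg sH α β t
  have p3 : pA (cconj h) α β t = (starRingEnd ℂ) (pA h α β t) := pA_conj h hh α β t
  have q1 : pB (fun x y s => g x y s * cconj h x y s * q x y s) α β t
      = pB (fun x y s => g x y s * cconj h x y s) α β t * q α β t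
        + g α β t * cconj h α β t * pB q α β t :=
    pB_mul _ q sGH hq α β t
  have q2 : pB (fun x y s => g x y s * cconj h x y s) α β t
      = pB g α β t * cconj h α β t + g α β t * pB (cconj h) α β t :=
    pB_mul g (cconj h) hg sH α β t
  have q3 : pB (cconj h) α β t = (starRingEnd ℂ) (pB h α β t) := pB_conj h hh α β t
  simp only [calP]
  rw [e1, e2, e3, e4, e5a, e5b, e5c, e6, e7, e8, p1, p2, p3, q1, q2, q3]
  simp only [map_add, map_mul, Complex.conj_I, Complex.conj_ofReal]
  ring
end

section
/- Let f : ℝ → ℂ be continuously differentiable with f(x) → 1 as |x| → ∞, satisfying |1 − f(x)| ≤ 1 for all x ∈ ℝ, and such that f − 1 ∈ L²(ℝ) and f²·f′ ∈ L²(ℝ). Then sup_{x∈ℝ} |f(x) − 1|² ≤ 36 · ‖f − 1‖_{L²(ℝ)} · ‖f²f′‖_{L²(ℝ)}. -/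
/-!
With `u = f³ - 1 = (f - 1)(f² + f + 1)` we have `u' = 3 f² f'`. For any `u : ℝ → E` vanishing
at infinity, integrating `(‖u‖²)' = 2⟪u, u'⟫` from `-∞` to `x` and from `x` to `∞` gives
`‖u x‖² ≤ ∫ |⟪u, u'⟫| ≤ ‖u‖₂ ‖u'‖₂` by Cauchy–Schwarz. The condition `|1 - f| ≤ 1` keeps `f` in a
disc on which `7/8 ≤ |f² + f + 1| ≤ 7`, so `(7/8)² |f x - 1|² ≤ 7 · 3 · ‖f - 1‖₂ ‖f² f'‖₂`,
and `21 · 64 / 49 < 36`.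
-/

open MeasureTheory Filter Topology
open scoped RealInnerProductSpace

section
variable {E : Type*} [NormedAddCommGroup E]

theorem two_mul_norm_le_integral_norm_of_hasDerivAt [NormedSpace ℝ E] [CompleteSpace E]
    {φ φ' : ℝ → E} (hderiv : ∀ t, HasDerivAt φ (φ' t) t) (hint : Integrable φ')
    (hlim : Tendsto φ (cocompact ℝ) (𝓝 0)) (x : ℝ) :
    2 * ‖φ x‖ ≤ ∫ t, ‖φ' t‖ := by
  rw [cocompact_eq_atBot_atTop] at hlim
  have hleft : ∫ t in Set.Iic x, φ' t = φ x := by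
    simpa using integral_Iic_of_hasDerivAt_of_tendsto' (fun t _ => hderiv t) hint.integrableOn
      (hlim.mono_left le_sup_left)
  have hright : ∫ t in Set.Ioi x, φ' t = -φ x := by
    simpa using integral_Ioi_of_hasDerivAt_of_tendsto' (fun t _ => hderiv t) hint.integrableOn
      (hlim.mono_left le_sup_right)
  calc 2 * ‖φ x‖ = ‖∫ t in Set.Iic x, φ' t‖ + ‖∫ t in Set.Ioi x, φ' t‖ := by
        rw [hleft, hright, norm_neg, two_mul]
    _ ≤ (∫ t in Set.Iic x, ‖φ' t‖) + ∫ t in Set.Ioi x, ‖φ' t‖ :=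
        add_le_add (norm_integral_le_integral_norm _) (norm_integral_le_integral_norm _)
    _ = ∫ t, ‖φ' t‖ := by
        rw [← Set.compl_Iic, integral_add_compl measurableSet_Iic hint.norm]

theorem toReal_eLpNorm_le_mul_of_le_mul {F α : Type*} [NormedAddCommGroup F] [MeasurableSpace α]
    {μ : Measure α} {p : ENNReal} {f : α → E} {g : α → F} {c : ℝ} (hc : 0 ≤ c)
    (hg : eLpNorm g p μ ≠ ⊤) (h : ∀ᵐ x ∂μ, ‖f x‖ ≤ c * ‖g x‖) :
    (eLpNorm f p μ).toReal ≤ c * (eLpNorm g p μ).toReal := by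
  calc (eLpNorm f p μ).toReal ≤ (ENNReal.ofReal c * eLpNorm g p μ).toReal :=
        ENNReal.toReal_mono (by finiteness) (eLpNorm_le_mul_eLpNorm_of_ae_le_mul h p)
    _ = c * (eLpNorm g p μ).toReal := by rw [ENNReal.toReal_mul, ENNReal.toReal_ofReal hc]

variable [InnerProductSpace ℝ E] {α : Type*} [MeasurableSpace α] {μ : Measure α}
  {u v : α → E}

theorem eLpNorm_one_inner_le (hu : AEStronglyMeasurable u μ) (hv : AEStronglyMeasurable v μ) :
    eLpNorm (fun x => ⟪u x, v x⟫) 1 μ ≤ eLpNorm u 2 μ * eLpNorm v 2 μ := by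
  simpa using eLpNorm_le_eLpNorm_mul_eLpNorm'_of_norm hu hv (fun a b => ⟪a, b⟫) 1
    (.of_forall fun x => by simpa using norm_inner_le_norm (𝕜 := ℝ) (u x) (v x))

theorem integrable_inner_of_memLp_two (hu : MemLp u 2 μ) (hv : MemLp v 2 μ) :
    Integrable (fun x => ⟪u x, v x⟫) μ :=
  memLp_one_iff_integrable.1 ⟨hu.1.inner hv.1,
    (eLpNorm_one_inner_le hu.1 hv.1).trans_lt (by finiteness [hu.2, hv.2])⟩

theorem integral_abs_inner_le_eLpNorm_mul_eLpNorm (hu : MemLp u 2 μ) (hv : MemLp v 2 μ) :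
    ∫ x, |⟪u x, v x⟫| ∂μ ≤ (eLpNorm u 2 μ).toReal * (eLpNorm v 2 μ).toReal := by
  have h := integral_norm_eq_lintegral_enorm (hu.1.inner (𝕜 := ℝ) hv.1)
  rw [← eLpNorm_one_eq_lintegral_enorm] at h
  simp only [Real.norm_eq_abs] at h
  rw [h, ← ENNReal.toReal_mul]
  exact ENNReal.toReal_mono (by finiteness [hu.2, hv.2]) (eLpNorm_one_inner_le hu.1 hv.1)

end

theorem sq_norm_le_eLpNorm_mul_eLpNorm_deriv {E : Type*} [NormedAddCommGroup E]
    [InnerProductSpace ℝ E] {u u' : ℝ → E} (hderiv : ∀ t, HasDerivAt u (u' t) t)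
    (hlim : Tendsto u (cocompact ℝ) (𝓝 0)) (hu : MemLp u 2 volume) (hu' : MemLp u' 2 volume)
    (x : ℝ) :
    ‖u x‖ ^ 2 ≤ (eLpNorm u 2 volume).toReal * (eLpNorm u' 2 volume).toReal := by
  have hsq : Tendsto (fun t => ‖u t‖ ^ 2) (cocompact ℝ) (𝓝 0) := by
    simpa using (hlim.norm.pow 2)
  have h := two_mul_norm_le_integral_norm_of_hasDerivAt (fun t => (hderiv t).norm_sq)
    ((integrable_inner_of_memLp_two hu hu').const_mul 2) hsq x
  simp only [norm_pow, abs_norm, norm_mul, Real.norm_ofNat, Real.norm_eq_abs,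
    integral_const_mul] at h
  linarith [integral_abs_inner_le_eLpNorm_mul_eLpNorm hu hu']

theorem Complex.norm_sq_add_self_add_one_le {z : ℂ} (hz : ‖1 - z‖ ≤ 1) :
    ‖z ^ 2 + z + 1‖ ≤ 7 := by
  have hz2 : ‖z‖ ≤ 2 := by
    calc ‖z‖ = ‖1 - (1 - z)‖ := by rw [sub_sub_cancel]
      _ ≤ ‖(1 : ℂ)‖ + ‖1 - z‖ := norm_sub_le _ _
      _ ≤ 2 := by rw [norm_one]; linarith
  calc ‖z ^ 2 + z + 1‖ ≤ ‖z‖ ^ 2 + ‖z‖ + 1 :=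
        norm_add₃_le.trans_eq (by rw [norm_pow, norm_one])
    _ ≤ 7 := by nlinarith [norm_nonneg z]

theorem Complex.le_norm_sq_add_self_add_one {z : ℂ} (hz : ‖1 - z‖ ≤ 1) :
    7 / 8 ≤ ‖z ^ 2 + z + 1‖ := by
  have hdisk : (1 - z.re) ^ 2 + z.im ^ 2 ≤ 1 := by
    have := Complex.normSq_eq_norm_sq (1 - z) ▸ pow_le_one₀ (norm_nonneg _) hz
    simpa [Complex.normSq_apply, sq] using this
  -- `im z ^ 2 ≤ 2 re z - re z ^ 2` on the disc, so `re (z² + z + 1) ≥ 2 re z ^ 2 - re z + 1`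
  calc (7 : ℝ) / 8 ≤ (z ^ 2 + z + 1).re := by
        simp only [sq, Complex.add_re, Complex.mul_re, Complex.one_re]
        nlinarith [sq_nonneg (z.re - 1 / 4)]
    _ ≤ ‖z ^ 2 + z + 1‖ := Complex.re_le_norm _

/-- Sobolev-type estimate (Lemma 4.2 of the paper, generic form):
if `f : ℝ → ℂ` is `C¹`, tends to `1` at infinity, satisfies `|1 − f| ≤ 1`
everywhere, and `f − 1 ∈ L²`, `f²f′ ∈ L²`, then
`sup |f − 1|² ≤ 36 ‖f − 1‖_{L²} ‖f²f′‖_{L²}`. -/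
theorem sobolev_type_estimate (f : ℝ → ℂ)
    (hf : ContDiff ℝ 1 f)
    (hlim : Tendsto f (cocompact ℝ) (nhds 1))
    (hbd : ∀ x : ℝ, ‖1 - f x‖ ≤ 1)
    (hL2 : MemLp (fun x => f x - 1) 2 volume)
    (hL2' : MemLp (fun x => f x ^ 2 * deriv f x) 2 volume) :
    ∀ x : ℝ, ‖f x - 1‖ ^ 2 ≤
      36 * (eLpNorm (fun x => f x - 1) 2 volume).toReal *
        (eLpNorm (fun x => f x ^ 2 * deriv f x) 2 volume).toReal := by
  intro x
  set A := (eLpNorm (fun x => f x - 1) 2 volume).toReal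
  set B := (eLpNorm (fun x => f x ^ 2 * deriv f x) 2 volume).toReal
  have hfactor : ∀ t, f t ^ 3 - 1 = (f t - 1) * (f t ^ 2 + f t + 1) := fun t => by ring
  have hu_le : ∀ t, ‖f t ^ 3 - 1‖ ≤ 7 * ‖f t - 1‖ := fun t => by
    rw [hfactor, norm_mul, mul_comm ‖f t - 1‖]
    exact mul_le_mul_of_nonneg_right (Complex.norm_sq_add_self_add_one_le (hbd t))
      (norm_nonneg _)
  have hderiv : ∀ t, HasDerivAt (fun t => f t ^ 3 - 1) (3 * (f t ^ 2 * deriv f t)) t :=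
    fun t => by
      simpa [mul_assoc] using ((hf.differentiable one_ne_zero t).hasDerivAt.pow 3).sub_const 1
  have hu : MemLp (fun t => f t ^ 3 - 1) 2 volume :=
    hL2.of_le_mul ((hf.continuous.pow 3).sub continuous_const).aestronglyMeasurable
      (.of_forall hu_le)
  have hsobolev := sq_norm_le_eLpNorm_mul_eLpNorm_deriv hderiv
    (by simpa using (hlim.pow 3).sub_const 1) hu (hL2'.const_mul 3) x
  have hA : (eLpNorm (fun t => f t ^ 3 - 1) 2 volume).toReal ≤ 7 * A :=
    toReal_eLpNorm_le_mul_of_le_mul (by norm_num) hL2.2.ne (.of_forall hu_le)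
  have hB : (eLpNorm (fun t => 3 * (f t ^ 2 * deriv f t)) 2 volume).toReal ≤ 3 * B :=
    toReal_eLpNorm_le_mul_of_le_mul (by norm_num) hL2'.2.ne
      (.of_forall fun t => (norm_mul_le _ _).trans_eq (by norm_num))
  have hlow : 7 / 8 * ‖f x - 1‖ ≤ ‖f x ^ 3 - 1‖ := by
    rw [hfactor, norm_mul, mul_comm ‖f x - 1‖]
    exact mul_le_mul_of_nonneg_right (Complex.le_norm_sq_add_self_add_one (hbd x))
      (norm_nonneg _)
  have hmain : (7 / 8 * ‖f x - 1‖) ^ 2 ≤ 7 * A * (3 * B) :=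
    (pow_le_pow_left₀ (by positivity) hlow 2).trans
      (hsobolev.trans (mul_le_mul hA hB ENNReal.toReal_nonneg (by positivity)))
  nlinarith [mul_nonneg (ENNReal.toReal_nonneg : 0 ≤ A) (ENNReal.toReal_nonneg : 0 ≤ B)]
end

section
/- For every complex number w with |1 − w| ≤ 1, one has Re(¼w² + ⅙w + 1/12) ≥ 1/36. Consequently, since ¼(w⁴ − 1) − ⅓(w³ − 1) = (w − 1)²·(¼w² + ⅙w + 1/12), one also has |¼(w⁴ − 1) − ⅓(w³ − 1)| ≥ (1/36)·|w − 1|². -/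
/-! On the disc `|1 - w| ≤ 1` we have `(Im w)² ≤ 2 Re w - (Re w)²`, so with `x = Re w`,
`Re(¼w² + ⅙w + 1/12) ≥ ½x² - ⅓x + 1/12 = ½(x - ⅓)² + 1/36`. The second bound follows from
the factorisation by `(w - 1)²` and `Re z ≤ |z|`. -/

namespace Complex

theorem im_sq_le_of_norm_one_sub_le {w : ℂ} (hw : ‖1 - w‖ ≤ 1) :
    w.im ^ 2 ≤ 2 * w.re - w.re ^ 2 := by
  have hsq : normSq (1 - w) ≤ 1 := by
    rw [← Complex.sq_norm]
    exact pow_le_one₀ (norm_nonneg _) hw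
  rw [normSq_apply] at hsq
  simp only [sub_re, one_re, sub_im, one_im] at hsq
  nlinarith

theorem one_div_thirtysix_le_re_of_norm_one_sub_le {w : ℂ} (hw : ‖1 - w‖ ≤ 1) :
    (1 / 36 : ℝ) ≤ ((1 / 4 : ℂ) * w ^ 2 + (1 / 6 : ℂ) * w + (1 / 12 : ℂ)).re := by
  have him := im_sq_le_of_norm_one_sub_le hw
  have hre : ((1 / 4 : ℂ) * w ^ 2 + (1 / 6 : ℂ) * w + (1 / 12 : ℂ)).re
      = (w.re ^ 2 - w.im ^ 2) / 4 + w.re / 6 + 1 / 12 := by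
    simp only [add_re, mul_re, pow_two]
    norm_num
    ring
  rw [hre]
  nlinarith [sq_nonneg (w.re - 1 / 3)]

theorem mul_norm_sq_le_norm_sq_mul_of_le_re {c : ℝ} {z : ℂ} (hz : c ≤ z.re) (u : ℂ) :
    c * ‖u‖ ^ 2 ≤ ‖u ^ 2 * z‖ := by
  rw [norm_mul, norm_pow, mul_comm]
  exact mul_le_mul_of_nonneg_left (hz.trans (re_le_norm z)) (sq_nonneg _)

end Complex

/-- For every complex number `w` with `|1 - w| ≤ 1`, the real part of
`¼w² + ⅙w + 1/12` is at least `1/36`; consequently, since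
`¼(w⁴ − 1) − ⅓(w³ − 1) = (w − 1)²(¼w² + ⅙w + 1/12)`, one also has
`|¼(w⁴ − 1) − ⅓(w³ − 1)| ≥ (1/36)|w − 1|²`. -/
theorem pointwise_algebraic_inequality (w : ℂ) (hw : ‖1 - w‖ ≤ 1) :
    (1 / 36 : ℝ) ≤ ((1 / 4 : ℂ) * w ^ 2 + (1 / 6 : ℂ) * w + (1 / 12 : ℂ)).re ∧
      (1 / 36 : ℝ) * ‖w - 1‖ ^ 2 ≤
        ‖(1 / 4 : ℂ) * (w ^ 4 - 1) - (1 / 3 : ℂ) * (w ^ 3 - 1)‖ := by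
  have hre := Complex.one_div_thirtysix_le_re_of_norm_one_sub_le hw
  have hfactor : (1 / 4 : ℂ) * (w ^ 4 - 1) - (1 / 3 : ℂ) * (w ^ 3 - 1)
      = (w - 1) ^ 2 * ((1 / 4 : ℂ) * w ^ 2 + (1 / 6 : ℂ) * w + (1 / 12 : ℂ)) := by
    ring
  rw [hfactor]
  exact ⟨hre, Complex.mul_norm_sq_le_norm_sq_mul_of_le_re hre (w - 1)⟩
end

section
/- There is a universal constant C > 0 such that for every locally integrable b : ℝ → ℝ with finite BMO seminorm and all bounded continuously differentiable f₁, f₂ : ℝ → ℂ with f₁′, f₂′ ∈ L²(ℝ), one has for every x ∈ ℝ: |∫_ℝ (b(y) − avg_x^y b) · (f₁(x)−f₁(y))(f₂(x)−f₂(y))/(x−y)² dy| ≤ C · ‖b‖_{BMO} ‖f₁′‖_{L²} ‖f₂′‖_{L²}. -/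
open MeasureTheory

/-- `avg_x^y b = (1/(x − y)) ∫_y^x b(s) ds`, the average of `b` between `y` and `x`. -/
noncomputable def intervalAvg (b : ℝ → ℝ) (x y : ℝ) : ℝ :=
  (1 / (x - y)) * ∫ s in y..x, b s

/-- The mean oscillation of `b` over the bounded nondegenerate interval `I`. -/
noncomputable def meanOsc (b : ℝ → ℝ) (I : {q : ℝ × ℝ // q.1 < q.2}) : ℝ :=
  (1 / (I.1.2 - I.1.1)) *
    ∫ y in Set.Ioo I.1.1 I.1.2,
      |b y - (1 / (I.1.2 - I.1.1)) * ∫ s in Set.Ioo I.1.1 I.1.2, b s|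

/-- The BMO seminorm: the supremum of mean oscillations over all bounded
nondegenerate intervals. -/
noncomputable def bmoSeminorm (b : ℝ → ℝ) : ℝ :=
  ⨆ I : {q : ℝ × ℝ // q.1 < q.2}, meanOsc b I

/-- `b` has finite BMO seminorm. -/
def HasFiniteBMO (b : ℝ → ℝ) : Prop :=
  BddAbove (Set.range (meanOsc b))

/-!
Split the `y`-integral at `x` and write `y = x ± t`. On each side the weight
`ω(t) = |b(x ± t) − avg_x^{x±t} b|` carries mass at most `4 ‖b‖_BMO r` on every `(r, 2r]`, because
there the average over `[x, x ± t]` is within `2 ‖b‖_BMO` of the average over `[x, x ± 2r]`.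
The difference quotient `|f(x ± t) − f(x)| / t` is at most the average of `|f′|` over the
segment, and a Hardy inequality for weights with this dyadic mass bound (sum over the shells
`(2ᵏ, 2ᵏ⁺¹]`, then a discrete Hardy inequality) gives
`∫ ω |f(x) − f(y)|² / |x − y|² dy ≤ 48 ‖b‖_BMO ‖f′‖₂²`. Cauchy–Schwarz with the weight `ω`
then bounds the bilinear integral by `48 ‖b‖_BMO ‖f₁′‖₂ ‖f₂′‖₂`.
-/

open Set
open scoped ENNReal

theorem ENNReal.lintegral_mul_mul_sq_le {α : Type*} [MeasurableSpace α] {μ : Measure α}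
    {w f g : α → ℝ≥0∞} (hw : AEMeasurable w μ) (hf : AEMeasurable f μ) (hg : AEMeasurable g μ) :
    (∫⁻ a, w a * f a * g a ∂μ) ^ 2 ≤ (∫⁻ a, w a * f a ^ 2 ∂μ) * ∫⁻ a, w a * g a ^ 2 ∂μ := by
  have sqrt_sq : ∀ z : ℝ≥0∞, (z ^ 2) ^ (2⁻¹ : ℝ) = z := fun z => by
    simpa using ENNReal.pow_rpow_inv_natCast (n := 2) two_ne_zero z
  have holder := lintegral_mul_norm_pow_le (f := fun a => w a * f a ^ 2)
    (g := fun a => w a * g a ^ 2) (hw.mul (hf.pow_const 2)) (hw.mul (hg.pow_const 2))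
    (p := 2⁻¹) (q := 2⁻¹) (by norm_num) (by norm_num) (by norm_num)
  have hpt : ∀ a, (w a * f a ^ 2) ^ (2⁻¹ : ℝ) * (w a * g a ^ 2) ^ (2⁻¹ : ℝ) = w a * f a * g a :=
    fun a => by
      rw [← ENNReal.mul_rpow_of_nonneg _ _ (by norm_num), ← sqrt_sq (w a * f a * g a)]
      ring_nf
  rw [lintegral_congr hpt] at holder
  calc (∫⁻ a, w a * f a * g a ∂μ) ^ 2
      ≤ ((∫⁻ a, w a * f a ^ 2 ∂μ) ^ (2⁻¹ : ℝ) * (∫⁻ a, w a * g a ^ 2 ∂μ) ^ (2⁻¹ : ℝ)) ^ 2 :=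
        pow_le_pow_left' holder 2
    _ = _ := by
      rw [mul_pow, ← ENNReal.rpow_natCast, ← ENNReal.rpow_natCast _ 2, ← ENNReal.rpow_mul,
        ← ENNReal.rpow_mul]
      norm_num

theorem ENNReal.tsum_sq_le_tsum_mul_tsum_inv_mul {ι : Type*} (w l : ι → ℝ≥0∞)
    (hw₀ : ∀ i, w i ≠ 0) (hw : ∀ i, w i ≠ ∞) :
    (∑' i, l i) ^ 2 ≤ (∑' i, w i) * ∑' i, (w i)⁻¹ * l i ^ 2 := by
  let _ : MeasurableSpace ι := ⊤
  have h := ENNReal.lintegral_mul_mul_sq_le (μ := Measure.count) (w := w) (f := 1)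
    (g := fun i => (w i)⁻¹ * l i) .of_discrete .of_discrete .of_discrete
  simp only [lintegral_count, Pi.one_apply, one_pow, mul_one] at h
  convert h using 2
  · exact tsum_congr fun i => by rw [← mul_assoc, ENNReal.mul_inv_cancel (hw₀ i) (hw i), one_mul]
  · exact tsum_congr fun i => by
      rw [mul_pow, ← mul_assoc, sq (w i)⁻¹, ← mul_assoc, ENNReal.mul_inv_cancel (hw₀ i) (hw i),
        one_mul]

theorem ENNReal.setLIntegral_sq_le {α : Type*} [MeasurableSpace α] {μ : Measure α} {s : Set α}
    {G : α → ℝ≥0∞} (hG : AEMeasurable G (μ.restrict s)) :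
    (∫⁻ a in s, G a ∂μ) ^ 2 ≤ μ s * ∫⁻ a in s, G a ^ 2 ∂μ := by
  simpa using ENNReal.lintegral_mul_mul_sq_le (μ := μ.restrict s) (w := 1) (f := 1)
    aemeasurable_const aemeasurable_const hG

theorem lintegral_enorm_sq_eq_eLpNorm_sq {α ε : Type*} [MeasurableSpace α] [ENorm ε]
    {μ : Measure α} (f : α → ε) :
    ∫⁻ a, ‖f a‖ₑ ^ 2 ∂μ = eLpNorm f 2 μ ^ 2 := by
  simpa using (eLpNorm_nnreal_pow_eq_lintegral (f := f) (μ := μ) (p := 2) two_ne_zero).symm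

theorem ENNReal.tsum_ofReal_pow {q : ℝ} (hq₀ : 0 ≤ q) (hq : q < 1) :
    ∑' n : ℕ, ENNReal.ofReal q ^ n = ENNReal.ofReal (1 - q)⁻¹ := by
  rw [ENNReal.tsum_geometric, ← ENNReal.ofReal_one, ← ENNReal.ofReal_sub _ hq₀,
    ENNReal.ofReal_inv_of_pos (by linarith)]

theorem ENNReal.ofReal_mul_div_sq {r : ℝ} (hr : 0 < r) (L : ℝ≥0∞) :
    ENNReal.ofReal r * (L / ENNReal.ofReal r) ^ 2 = (ENNReal.ofReal r)⁻¹ * L ^ 2 := by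
  have h₀ : ENNReal.ofReal r ≠ 0 := by simpa using hr
  rw [div_eq_mul_inv, mul_pow, sq (ENNReal.ofReal r)⁻¹, ← mul_assoc, mul_comm _ (L ^ 2), mul_assoc,
    ← mul_assoc (ENNReal.ofReal r), ENNReal.mul_inv_cancel h₀ ENNReal.ofReal_ne_top, one_mul,
    mul_comm]

theorem inv_ofReal_two_zpow_add_natCast (j : ℤ) (n : ℕ) :
    (ENNReal.ofReal (2 ^ (j + n)))⁻¹ = (ENNReal.ofReal (2 ^ j))⁻¹ * 2⁻¹ ^ n := by
  rw [zpow_add₀ two_ne_zero, zpow_natCast, ENNReal.ofReal_mul (by positivity),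
    ENNReal.ofReal_pow zero_le_two, ENNReal.ofReal_ofNat,
    ENNReal.mul_inv (.inr (by simp)) (.inr (by simp)), ENNReal.inv_pow]

theorem tsum_inv_ofReal_two_zpow_mul_sub_natCast (h : ℤ → ℝ≥0∞) (n : ℕ) :
    ∑' k : ℤ, (ENNReal.ofReal (2 ^ k))⁻¹ * h (k - n)
      = 2⁻¹ ^ n * ∑' k : ℤ, (ENNReal.ofReal (2 ^ k))⁻¹ * h k := by
  rw [← (Equiv.addRight (n : ℤ)).tsum_eq, ← ENNReal.tsum_mul_left]
  refine tsum_congr fun k => ?_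
  rw [Equiv.coe_addRight, add_sub_cancel_right, inv_ofReal_two_zpow_add_natCast]
  ring

theorem tsum_inv_ofReal_two_zpow_mul_sq_tsum_le (l : ℤ → ℝ≥0∞) :
    ∑' k : ℤ, (ENNReal.ofReal (2 ^ k))⁻¹ * (∑' n : ℕ, l (k - n)) ^ 2
      ≤ 12 * ∑' k : ℤ, (ENNReal.ofReal (2 ^ k))⁻¹ * l k ^ 2 := by
  -- Cauchy–Schwarz with weights `q ^ n`; any `q ∈ (1/2, 1)` works, `q = 2/3` gives `3 * 4`.
  set q := ENNReal.ofReal (2 / 3)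
  have hq : ∑' n : ℕ, q ^ n = 3 := by
    rw [ENNReal.tsum_ofReal_pow (by norm_num) (by norm_num)]; norm_num
  have hq' : ∑' n : ℕ, (q⁻¹ * 2⁻¹) ^ n = 4 := by
    rw [← ENNReal.ofReal_inv_of_pos (by norm_num), ← ENNReal.ofReal_ofNat 2,
      ← ENNReal.ofReal_inv_of_pos (by norm_num), ← ENNReal.ofReal_mul (by norm_num),
      ENNReal.tsum_ofReal_pow (by norm_num) (by norm_num)]
    norm_num
  have cauchy_schwarz : ∀ k : ℤ,
      (∑' n : ℕ, l (k - n)) ^ 2 ≤ 3 * ∑' n : ℕ, q⁻¹ ^ n * l (k - n) ^ 2 := fun k => by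
    have := ENNReal.tsum_sq_le_tsum_mul_tsum_inv_mul (fun n : ℕ => q ^ n) (fun n : ℕ => l (k - n))
      (fun n => pow_ne_zero _ (by simp [q])) (fun n => ENNReal.pow_ne_top ENNReal.ofReal_ne_top)
    simpa only [hq, ENNReal.inv_pow] using this
  calc ∑' k : ℤ, (ENNReal.ofReal (2 ^ k))⁻¹ * (∑' n : ℕ, l (k - n)) ^ 2
      ≤ ∑' k : ℤ, ∑' n : ℕ, 3 * (q⁻¹ ^ n * ((ENNReal.ofReal (2 ^ k))⁻¹ * l (k - n) ^ 2)) :=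
        ENNReal.tsum_le_tsum fun k => (mul_le_mul_right (cauchy_schwarz k) _).trans_eq <| by
          rw [← ENNReal.tsum_mul_left, ← ENNReal.tsum_mul_left]
          exact tsum_congr fun n => by ring
    _ = 3 * ∑' n : ℕ, (q⁻¹ * 2⁻¹) ^ n * ∑' k : ℤ, (ENNReal.ofReal (2 ^ k))⁻¹ * l k ^ 2 := by
        rw [ENNReal.tsum_comm]
        simp only [ENNReal.tsum_mul_left]
        congr 1
        refine tsum_congr fun n => ?_
        rw [tsum_inv_ofReal_two_zpow_mul_sub_natCast (fun k => l k ^ 2), mul_pow, mul_assoc]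
    _ = 12 * ∑' k : ℤ, (ENNReal.ofReal (2 ^ k))⁻¹ * l k ^ 2 := by
        rw [ENNReal.tsum_mul_right, hq', ← mul_assoc]
        norm_num

theorem Real.iUnion_Ioc_zpow {c : ℝ} (hc : 1 < c) :
    ⋃ k : ℤ, Ioc (c ^ k) (c ^ (k + 1)) = Ioi 0 := by
  ext t
  simp only [mem_iUnion, mem_Ioi]
  exact ⟨fun ⟨k, hk⟩ => (zpow_pos (by linarith) k).trans hk.1,
    fun ht => exists_mem_Ioc_zpow ht hc⟩

theorem Real.pairwise_disjoint_Ioc_zpow {c : ℝ} (hc : 1 < c) :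
    Pairwise (Function.onFun Disjoint fun k : ℤ => Ioc (c ^ k) (c ^ (k + 1))) := by
  intro m n hmn
  refine disjoint_left.2 fun t htm htn => hmn ?_
  have i1 := htm.1.trans_le htn.2
  have i2 := htn.1.trans_le htm.2
  rw [zpow_lt_zpow_iff_right₀ hc, Int.lt_add_one_iff] at i1 i2
  exact le_antisymm i1 i2

theorem setLIntegral_Ioi_zero_eq_tsum_Ioc_two_zpow (F : ℝ → ℝ≥0∞) :
    ∫⁻ t in Ioi 0, F t = ∑' k : ℤ, ∫⁻ t in Ioc (2 ^ k) (2 ^ (k + 1)), F t := by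
  rw [← Real.iUnion_Ioc_zpow one_lt_two,
    lintegral_iUnion (fun _ => measurableSet_Ioc) (Real.pairwise_disjoint_Ioc_zpow one_lt_two)]

theorem Ioc_zero_two_zpow_subset_iUnion (k : ℤ) :
    Ioc 0 ((2 : ℝ) ^ (k + 1)) ⊆ ⋃ n : ℕ, Ioc (2 ^ (k - n)) (2 ^ (k - n + 1)) := by
  intro t ht
  obtain ⟨j, hj⟩ := exists_mem_Ioc_zpow ht.1 one_lt_two
  have hjk : j ≤ k := by
    have := hj.1.trans_le ht.2
    rwa [zpow_lt_zpow_iff_right₀ one_lt_two, Int.lt_add_one_iff] at this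
  refine mem_iUnion.2 ⟨(k - j).toNat, ?_⟩
  rwa [Int.toNat_of_nonneg (by omega), sub_sub_cancel]

theorem Real.volume_Ioc_two_zpow (k : ℤ) :
    volume (Ioc ((2 : ℝ) ^ k) (2 ^ (k + 1))) = ENNReal.ofReal (2 ^ k) := by
  rw [Real.volume_Ioc, zpow_add_one₀ two_ne_zero]
  ring_nf

theorem setLIntegral_Ioc_two_zpow_mul_sq_div_le {ω G : ℝ → ℝ≥0∞} (hω : AEMeasurable ω)
    {A : ℝ≥0∞} {k : ℤ}
    (hωA : ∫⁻ t in Ioc (2 ^ k) (2 ^ (k + 1)), ω t ≤ A * ENNReal.ofReal (2 ^ k)) :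
    ∫⁻ t in Ioc (2 ^ k) (2 ^ (k + 1)), ω t * ((∫⁻ s in Ioc 0 t, G s) / ENNReal.ofReal t) ^ 2
      ≤ A * ((ENNReal.ofReal (2 ^ k))⁻¹ *
        (∑' n : ℕ, ∫⁻ s in Ioc (2 ^ (k - n)) (2 ^ (k - n + 1)), G s) ^ 2) := by
  set L := ∑' n : ℕ, ∫⁻ s in Ioc (2 ^ (k - n)) (2 ^ (k - n + 1)), G s
  have hpt : ∀ t ∈ Ioc ((2 : ℝ) ^ k) (2 ^ (k + 1)),
      (∫⁻ s in Ioc 0 t, G s) / ENNReal.ofReal t ≤ L / ENNReal.ofReal (2 ^ k) := fun t ht => by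
    refine ENNReal.div_le_div ?_ (ENNReal.ofReal_le_ofReal ht.1.le)
    calc ∫⁻ s in Ioc 0 t, G s ≤ ∫⁻ s in ⋃ n : ℕ, Ioc (2 ^ (k - n)) (2 ^ (k - n + 1)), G s :=
          lintegral_mono_set ((Ioc_subset_Ioc_right ht.2).trans
            (Ioc_zero_two_zpow_subset_iUnion k))
      _ ≤ L := lintegral_iUnion_le _ _
  calc ∫⁻ t in Ioc (2 ^ k) (2 ^ (k + 1)), ω t * ((∫⁻ s in Ioc 0 t, G s) / ENNReal.ofReal t) ^ 2
      ≤ ∫⁻ t in Ioc (2 ^ k) (2 ^ (k + 1)), ω t * (L / ENNReal.ofReal (2 ^ k)) ^ 2 :=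
        setLIntegral_mono' measurableSet_Ioc fun t ht =>
          mul_le_mul_right (pow_le_pow_left' (hpt t ht) 2) _
    _ = (∫⁻ t in Ioc (2 ^ k) (2 ^ (k + 1)), ω t) * (L / ENNReal.ofReal (2 ^ k)) ^ 2 :=
        lintegral_mul_const'' _ hω.restrict
    _ ≤ A * ENNReal.ofReal (2 ^ k) * (L / ENNReal.ofReal (2 ^ k)) ^ 2 := by gcongr
    _ = A * ((ENNReal.ofReal (2 ^ k))⁻¹ * L ^ 2) := by
        rw [mul_assoc, ENNReal.ofReal_mul_div_sq (by positivity)]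

theorem lintegral_Ioi_mul_sq_lintegral_Ioc_div_le {ω G : ℝ → ℝ≥0∞} (hω : AEMeasurable ω)
    (hG : AEMeasurable G) {A : ℝ≥0∞}
    (hωA : ∀ r > 0, ∫⁻ t in Ioc r (2 * r), ω t ≤ A * ENNReal.ofReal r) :
    ∫⁻ t in Ioi 0, ω t * ((∫⁻ s in Ioc 0 t, G s) / ENNReal.ofReal t) ^ 2
      ≤ 12 * A * ∫⁻ t in Ioi 0, G t ^ 2 := by
  set l : ℤ → ℝ≥0∞ := fun j => ∫⁻ s in Ioc (2 ^ j) (2 ^ (j + 1)), G s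
  have annulus (k : ℤ) := setLIntegral_Ioc_two_zpow_mul_sq_div_le (G := G) hω (k := k)
    (by simpa [zpow_add_one₀, mul_comm] using hωA (2 ^ k) (by positivity))
  have local_cs (j : ℤ) : (ENNReal.ofReal (2 ^ j))⁻¹ * l j ^ 2
      ≤ ∫⁻ s in Ioc (2 ^ j) (2 ^ (j + 1)), G s ^ 2 := by
    rw [ENNReal.inv_mul_le_iff (by simp; positivity) ENNReal.ofReal_ne_top,
      ← Real.volume_Ioc_two_zpow j]
    exact ENNReal.setLIntegral_sq_le hG.restrict
  calc ∫⁻ t in Ioi 0, ω t * ((∫⁻ s in Ioc 0 t, G s) / ENNReal.ofReal t) ^ 2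
      ≤ ∑' k : ℤ, A * ((ENNReal.ofReal (2 ^ k))⁻¹ * (∑' n : ℕ, l (k - n)) ^ 2) := by
        rw [setLIntegral_Ioi_zero_eq_tsum_Ioc_two_zpow]
        exact ENNReal.tsum_le_tsum annulus
    _ ≤ A * (12 * ∑' k : ℤ, (ENNReal.ofReal (2 ^ k))⁻¹ * l k ^ 2) := by
        rw [ENNReal.tsum_mul_left]
        gcongr
        exact tsum_inv_ofReal_two_zpow_mul_sq_tsum_le l
    _ ≤ 12 * A * ∫⁻ t in Ioi 0, G t ^ 2 := by
        rw [setLIntegral_Ioi_zero_eq_tsum_Ioc_two_zpow, mul_left_comm, mul_assoc]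
        gcongr
        exact local_cs _

theorem lintegral_Ioi_mul_sq_slope_le {E : Type*} [NormedAddCommGroup E] [NormedSpace ℝ E]
    {g : ℝ → E} (hg : ContDiff ℝ 1 g) {ω : ℝ → ℝ≥0∞} (hω : AEMeasurable ω) {A : ℝ≥0∞}
    (hωA : ∀ r > 0, ∫⁻ t in Ioc r (2 * r), ω t ≤ A * ENNReal.ofReal r) :
    ∫⁻ t in Ioi 0, ω t * (‖g t - g 0‖ₑ / ‖t‖ₑ) ^ 2
      ≤ 12 * A * ∫⁻ t in Ioi 0, ‖deriv g t‖ₑ ^ 2 := by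
  refine le_trans (setLIntegral_mono' measurableSet_Ioi fun t (ht : 0 < t) => ?_)
    (lintegral_Ioi_mul_sq_lintegral_Ioc_div_le hω
      (hg.continuous_deriv le_rfl).enorm.measurable.aemeasurable hωA)
  rw [Real.enorm_of_nonneg ht.le, restrict_Ioc_eq_restrict_Icc]
  gcongr
  exact enorm_sub_le_lintegral_deriv_of_contDiffOn_Icc hg.contDiffOn ht.le

theorem lintegral_eq_setLIntegral_Ioi_comp_add_add_comp_sub (F : ℝ → ℝ≥0∞) (x : ℝ) :
    ∫⁻ y, F y = (∫⁻ t in Ioi 0, F (x + t)) + ∫⁻ t in Ioi 0, F (x - t) := by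
  have right : ∫⁻ t in Ioi 0, F (x + t) = ∫⁻ y in Ioi x, F y := by
    simpa [image_const_add_Ioi] using (measurePreserving_add_left volume x).setLIntegral_comp_emb
      (measurableEmbedding_addLeft x) F (Ioi 0)
  have left : ∫⁻ t in Ioi 0, F (x - t) = ∫⁻ y in Iio x, F y := by
    simpa [image_const_sub_Ioi] using
      (Measure.measurePreserving_sub_left volume x).setLIntegral_comp_emb
        (measurableEmbedding_subLeft x) F (Ioi 0)
  have hx : ({x}ᶜ : Set ℝ) =ᵐ[volume] univ := by simp [ae_eq_univ]
  rw [right, left, add_comm, ← lintegral_union measurableSet_Ioi Iio_disjoint_Ioi_same,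
    Iio_union_Ioi, Measure.restrict_congr_set hx, setLIntegral_univ]

section BMO

variable {b : ℝ → ℝ}

theorem meanOsc_nonneg (b : ℝ → ℝ) (I : {q : ℝ × ℝ // q.1 < q.2}) : 0 ≤ meanOsc b I :=
  mul_nonneg (one_div_nonneg.2 (sub_pos.2 I.2).le) (integral_nonneg fun _ => abs_nonneg _)

theorem bmoSeminorm_nonneg (hb : HasFiniteBMO b) : 0 ≤ bmoSeminorm b :=
  (meanOsc_nonneg b ⟨(0, 1), one_pos⟩).trans (le_ciSup hb _)

theorem setAverage_Ioo_eq {a c : ℝ} (h : a ≤ c) (f : ℝ → ℝ) :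
    ⨍ s in Ioo a c, f s = (c - a)⁻¹ * ∫ s in Ioo a c, f s := by
  rw [setAverage_eq, Real.volume_real_Ioo_of_le h, smul_eq_mul]

theorem intervalAvg_eq_setAverage (b : ℝ → ℝ) (x y : ℝ) :
    intervalAvg b x y = ⨍ s in Ioo (min x y) (max x y), b s := by
  rw [setAverage_Ioo_eq min_le_max, intervalAvg]
  rcases lt_trichotomy x y with h | rfl | h
  · rw [min_eq_left h.le, max_eq_right h.le, intervalIntegral.integral_symm,
      intervalIntegral.integral_of_le h.le, integral_Ioc_eq_integral_Ioo, ← neg_sub y x,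
      one_div, inv_neg]
    ring
  · simp
  · rw [min_eq_right h.le, max_eq_left h.le, intervalIntegral.integral_of_le h.le,
      integral_Ioc_eq_integral_Ioo, one_div]

theorem measurable_intervalAvg (hloc : LocallyIntegrable b) (x : ℝ) :
    Measurable (intervalAvg b x) := by
  have hprim : Continuous fun y => ∫ s in y..x, b s :=
    (intervalIntegral.continuous_primitive (fun _ _ =>
      (hloc.integrableOn_isCompact isCompact_uIcc).intervalIntegrable) x).neg.congr
      fun y => (intervalIntegral.integral_symm x y).symm
  exact (measurable_const.div (measurable_const.sub measurable_id)).mul hprim.measurable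

theorem aemeasurable_enorm_sub_intervalAvg (hloc : LocallyIntegrable b) (x : ℝ) :
    AEMeasurable fun y => ‖b y - intervalAvg b x y‖ₑ :=
  (hloc.aestronglyMeasurable.aemeasurable.sub (measurable_intervalAvg hloc x).aemeasurable).enorm

theorem setIntegral_abs_sub_setAverage_le (hb : HasFiniteBMO b) {a c : ℝ} (h : a < c) :
    ∫ y in Ioo a c, |b y - ⨍ s in Ioo a c, b s| ≤ (c - a) * bmoSeminorm b := by
  have hosc : meanOsc b ⟨(a, c), h⟩ ≤ bmoSeminorm b := le_ciSup hb _
  simp only [meanOsc, one_div] at hosc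
  rwa [← setAverage_Ioo_eq h.le b, inv_mul_le_iff₀ (sub_pos.2 h)] at hosc

theorem abs_setAverage_sub_setAverage_le (hloc : LocallyIntegrable b) (hb : HasFiniteBMO b)
    {a c u v : ℝ} (hau : a ≤ u) (huv : u < v) (hvc : v ≤ c) :
    |(⨍ s in Ioo u v, b s) - ⨍ s in Ioo a c, b s| ≤ (c - a) / (v - u) * bmoSeminorm b := by
  set m := ⨍ s in Ioo a c, b s
  have hbI : IntegrableOn b (Ioo a c) :=
    (hloc.integrableOn_isCompact isCompact_Icc).mono_set Ioo_subset_Icc_self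
  have hI : IntegrableOn (fun y => b y - m) (Ioo a c) :=
    hbI.sub (integrableOn_const measure_Ioo_lt_top.ne)
  have hJ : (⨍ s in Ioo u v, b s) - m = (v - u)⁻¹ * ∫ y in Ioo u v, (b y - m) := by
    rw [integral_sub (hbI.mono_set (Ioo_subset_Ioo hau hvc))
      (integrableOn_const measure_Ioo_lt_top.ne), setIntegral_const,
      Real.volume_real_Ioo_of_le huv.le, setAverage_Ioo_eq huv.le, smul_eq_mul]
    field_simp [(sub_pos.2 huv).ne']
  calc |(⨍ s in Ioo u v, b s) - m|
      ≤ (v - u)⁻¹ * ∫ y in Ioo u v, |b y - m| := by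
        rw [hJ, abs_mul, abs_of_pos (inv_pos.2 (sub_pos.2 huv))]
        gcongr
        exact abs_integral_le_integral_abs
    _ ≤ (v - u)⁻¹ * ∫ y in Ioo a c, |b y - m| := by
        refine mul_le_mul_of_nonneg_left ?_ (inv_pos.2 (sub_pos.2 huv)).le
        exact setIntegral_mono_set hI.abs (.of_forall fun _ => abs_nonneg _)
          (Ioo_subset_Ioo hau hvc).eventuallyLE
    _ ≤ (v - u)⁻¹ * ((c - a) * bmoSeminorm b) := by
        gcongr
        exact setIntegral_abs_sub_setAverage_le hb (hau.trans_lt (huv.trans_le hvc))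
    _ = (c - a) / (v - u) * bmoSeminorm b := by ring

theorem abs_intervalAvg_sub_setAverage_le (hloc : LocallyIntegrable b) (hb : HasFiniteBMO b)
    {a c x y : ℝ} (hxy : x ≠ y) (ha : a ≤ min x y) (hc : max x y ≤ c)
    (hfar : c - a ≤ 2 * |x - y|) :
    |intervalAvg b x y - ⨍ s in Ioo a c, b s| ≤ 2 * bmoSeminorm b := by
  rw [intervalAvg_eq_setAverage]
  refine (abs_setAverage_sub_setAverage_le hloc hb ha (min_lt_max.2 hxy) hc).trans ?_
  rw [max_sub_min_eq_abs, abs_sub_comm]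
  refine mul_le_mul_of_nonneg_right ?_ (bmoSeminorm_nonneg hb)
  rwa [div_le_iff₀ (abs_pos.2 (sub_ne_zero.2 hxy))]

theorem setLIntegral_enorm_sub_le_of_abs_sub_setAverage_le (hloc : LocallyIntegrable b)
    (hb : HasFiniteBMO b) {a c r : ℝ} (hr : 0 < r) (hac : c - a = 2 * r) {S : Set ℝ}
    (hS_meas : MeasurableSet S) (hS : S ⊆ Icc a c) (hvol : volume S ≤ ENNReal.ofReal r)
    {m : ℝ → ℝ} (hm : ∀ y ∈ S, |m y - ⨍ s in Ioo a c, b s| ≤ 2 * bmoSeminorm b) :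
    ∫⁻ y in S, ‖b y - m y‖ₑ ≤ ENNReal.ofReal (4 * bmoSeminorm b) * ENNReal.ofReal r := by
  set bI := ⨍ s in Ioo a c, b s
  have hB := bmoSeminorm_nonneg hb
  have hI : IntegrableOn (fun y => b y - bI) (Ioo a c) :=
    ((hloc.integrableOn_isCompact isCompact_Icc).mono_set Ioo_subset_Icc_self).sub
      (integrableOn_const measure_Ioo_lt_top.ne)
  have near (y : ℝ) (hy : y ∈ S) :
      ‖b y - m y‖ₑ ≤ ‖b y - bI‖ₑ + ENNReal.ofReal (2 * bmoSeminorm b) := calc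
    ‖b y - m y‖ₑ = ‖(b y - bI) + (bI - m y)‖ₑ := by ring_nf
    _ ≤ ‖b y - bI‖ₑ + ‖bI - m y‖ₑ := enorm_add_le _ _
    _ ≤ ‖b y - bI‖ₑ + ENNReal.ofReal (2 * bmoSeminorm b) := by
        gcongr
        rw [Real.enorm_eq_ofReal_abs, abs_sub_comm]
        exact ENNReal.ofReal_le_ofReal (hm y hy)
  have osc : ∫⁻ y in S, ‖b y - bI‖ₑ ≤ ENNReal.ofReal ((c - a) * bmoSeminorm b) := calc
    ∫⁻ y in S, ‖b y - bI‖ₑ ≤ ∫⁻ y in Icc a c, ‖b y - bI‖ₑ := lintegral_mono_set hS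
    _ = ENNReal.ofReal (∫ y in Ioo a c, |b y - bI|) := by
        simp only [← Real.norm_eq_abs]
        rw [← restrict_Ioo_eq_restrict_Icc, ofReal_integral_norm_eq_lintegral_enorm hI]
    _ ≤ _ := ENNReal.ofReal_le_ofReal (setIntegral_abs_sub_setAverage_le hb (by linarith))
  calc ∫⁻ y in S, ‖b y - m y‖ₑ
      ≤ ∫⁻ y in S, (‖b y - bI‖ₑ + ENNReal.ofReal (2 * bmoSeminorm b)) :=
        setLIntegral_mono' hS_meas near
    _ = (∫⁻ y in S, ‖b y - bI‖ₑ) + volume S * ENNReal.ofReal (2 * bmoSeminorm b) := by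
        rw [lintegral_add_right _ measurable_const, setLIntegral_const, mul_comm]
    _ ≤ ENNReal.ofReal (2 * r * bmoSeminorm b) +
          ENNReal.ofReal r * ENNReal.ofReal (2 * bmoSeminorm b) := by
        rw [← hac]
        gcongr
    _ = ENNReal.ofReal (4 * bmoSeminorm b) * ENNReal.ofReal r := by
        rw [← ENNReal.ofReal_mul hr.le, ← ENNReal.ofReal_add (by positivity) (by positivity),
          ← ENNReal.ofReal_mul (by positivity)]
        ring_nf

theorem setLIntegral_Ioc_enorm_sub_intervalAvg_add_le (hloc : LocallyIntegrable b)
    (hb : HasFiniteBMO b) (x : ℝ) {r : ℝ} (hr : 0 < r) :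
    ∫⁻ t in Ioc r (2 * r), ‖b (x + t) - intervalAvg b x (x + t)‖ₑ
      ≤ ENNReal.ofReal (4 * bmoSeminorm b) * ENNReal.ofReal r := by
  rw [(measurePreserving_add_left volume x).setLIntegral_comp_emb (measurableEmbedding_addLeft x)
    (fun y => ‖b y - intervalAvg b x y‖ₑ), image_const_add_Ioc]
  refine setLIntegral_enorm_sub_le_of_abs_sub_setAverage_le hloc hb hr (a := x) (c := x + 2 * r)
    (by ring) measurableSet_Ioc (Ioc_subset_Icc_self.trans (Icc_subset_Icc (by linarith) le_rfl))
    (by rw [Real.volume_Ioc]; ring_nf; rfl) fun y hy =>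
      abs_intervalAvg_sub_setAverage_le hloc hb (by linarith [hy.1])
        (le_min le_rfl (by linarith [hy.1])) (max_le (by linarith) hy.2)
        (by linarith [neg_le_abs (x - y), hy.1])

theorem setLIntegral_Ioc_enorm_sub_intervalAvg_sub_le (hloc : LocallyIntegrable b)
    (hb : HasFiniteBMO b) (x : ℝ) {r : ℝ} (hr : 0 < r) :
    ∫⁻ t in Ioc r (2 * r), ‖b (x - t) - intervalAvg b x (x - t)‖ₑ
      ≤ ENNReal.ofReal (4 * bmoSeminorm b) * ENNReal.ofReal r := by
  rw [(Measure.measurePreserving_sub_left volume x).setLIntegral_comp_emb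
    (measurableEmbedding_subLeft x) (fun y => ‖b y - intervalAvg b x y‖ₑ), image_const_sub_Ioc]
  refine setLIntegral_enorm_sub_le_of_abs_sub_setAverage_le hloc hb hr (a := x - 2 * r) (c := x)
    (by ring) measurableSet_Ico (Ico_subset_Icc_self.trans (Icc_subset_Icc le_rfl (by linarith)))
    (by rw [Real.volume_Ico]; ring_nf; rfl) fun y hy =>
      abs_intervalAvg_sub_setAverage_le hloc hb (by linarith [hy.2])
        (le_min (by linarith) hy.1) (max_le le_rfl (by linarith [hy.2]))
        (by linarith [le_abs_self (x - y), hy.2])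

end BMO

section Estimate

variable {b : ℝ → ℝ} {E : Type*} [NormedAddCommGroup E] [NormedSpace ℝ E]

theorem lintegral_enorm_sub_intervalAvg_mul_sq_slope_le (hloc : LocallyIntegrable b)
    (hb : HasFiniteBMO b) {f : ℝ → E} (hf : ContDiff ℝ 1 f) (x : ℝ) :
    ∫⁻ y, ‖b y - intervalAvg b x y‖ₑ * (‖f x - f y‖ₑ / ‖x - y‖ₑ) ^ 2
      ≤ ENNReal.ofReal (48 * bmoSeminorm b) * eLpNorm (deriv f) 2 volume ^ 2 := by
  have hω := aemeasurable_enorm_sub_intervalAvg hloc x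
  have hK : ENNReal.ofReal (48 * bmoSeminorm b) = 12 * ENNReal.ofReal (4 * bmoSeminorm b) := by
    rw [show (48 : ℝ) * bmoSeminorm b = 12 * (4 * bmoSeminorm b) by ring,
      ENNReal.ofReal_mul (by norm_num), ENNReal.ofReal_ofNat]
  rw [← lintegral_enorm_sq_eq_eLpNorm_sq, lintegral_eq_setLIntegral_Ioi_comp_add_add_comp_sub _ x,
    lintegral_eq_setLIntegral_Ioi_comp_add_add_comp_sub (fun y => ‖deriv f y‖ₑ ^ 2) x, mul_add,
    hK]
  gcongr ?_ + ?_
  · have := lintegral_Ioi_mul_sq_slope_le (g := fun t => f (x + t))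
      (hf.comp (contDiff_const.add contDiff_id))
      (hω.comp_quasiMeasurePreserving (measurePreserving_add_left volume x).quasiMeasurePreserving)
      (fun r hr => setLIntegral_Ioc_enorm_sub_intervalAvg_add_le hloc hb x hr)
    simpa [deriv_comp_const_add, enorm_sub_rev (f x)] using this
  · have := lintegral_Ioi_mul_sq_slope_le (g := fun t => f (x - t))
      (hf.comp (contDiff_const.sub contDiff_id))
      (hω.comp_quasiMeasurePreserving
        (Measure.measurePreserving_sub_left volume x).quasiMeasurePreserving)
      (fun r hr => setLIntegral_Ioc_enorm_sub_intervalAvg_sub_le hloc hb x hr)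
    simpa [deriv_comp_const_sub, enorm_sub_rev (f x)] using this

theorem lintegral_enorm_sub_intervalAvg_mul_slope_mul_slope_le (hloc : LocallyIntegrable b)
    (hb : HasFiniteBMO b) {f₁ f₂ : ℝ → E} (hf₁ : ContDiff ℝ 1 f₁) (hf₂ : ContDiff ℝ 1 f₂)
    (x : ℝ) :
    ∫⁻ y, ‖b y - intervalAvg b x y‖ₑ * (‖f₁ x - f₁ y‖ₑ / ‖x - y‖ₑ) * (‖f₂ x - f₂ y‖ₑ / ‖x - y‖ₑ)
      ≤ ENNReal.ofReal (48 * bmoSeminorm b) * eLpNorm (deriv f₁) 2 volume *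
          eLpNorm (deriv f₂) 2 volume := by
  have slope (f : ℝ → E) (hf : ContDiff ℝ 1 f) :
      AEMeasurable fun y => ‖f x - f y‖ₑ / ‖x - y‖ₑ := by
    have := hf.continuous
    fun_prop
  rw [← ENNReal.pow_le_pow_left_iff two_ne_zero]
  calc _ ≤ (∫⁻ y, ‖b y - intervalAvg b x y‖ₑ * (‖f₁ x - f₁ y‖ₑ / ‖x - y‖ₑ) ^ 2) *
        ∫⁻ y, ‖b y - intervalAvg b x y‖ₑ * (‖f₂ x - f₂ y‖ₑ / ‖x - y‖ₑ) ^ 2 :=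
        ENNReal.lintegral_mul_mul_sq_le (aemeasurable_enorm_sub_intervalAvg hloc x)
          (slope f₁ hf₁) (slope f₂ hf₂)
    _ ≤ (ENNReal.ofReal (48 * bmoSeminorm b) * eLpNorm (deriv f₁) 2 volume ^ 2) *
        (ENNReal.ofReal (48 * bmoSeminorm b) * eLpNorm (deriv f₂) 2 volume ^ 2) := by
        gcongr
        · exact lintegral_enorm_sub_intervalAvg_mul_sq_slope_le hloc hb hf₁ x
        · exact lintegral_enorm_sub_intervalAvg_mul_sq_slope_le hloc hb hf₂ x
    _ = _ := by ring

end Estimate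

theorem enorm_ofReal_mul_sub_mul_sub_div_sq_le (r : ℝ) (f₁ f₂ : ℝ → ℂ) (x y : ℝ) :
    ‖(r : ℂ) * ((f₁ x - f₁ y) * (f₂ x - f₂ y) / ((x - y : ℝ) : ℂ) ^ 2)‖ₑ
      ≤ ‖r‖ₑ * (‖f₁ x - f₁ y‖ₑ / ‖x - y‖ₑ) * (‖f₂ x - f₂ y‖ₑ / ‖x - y‖ₑ) := by
  rcases eq_or_ne y x with rfl | hxy
  · simp
  have hℂ (s : ℝ) : ‖(s : ℂ)‖ₑ = ‖s‖ₑ := by simp [enorm]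
  have hne : ((x - y : ℝ) : ℂ) ≠ 0 := by exact_mod_cast sub_ne_zero.2 hxy.symm
  simp only [div_eq_mul_inv, enorm_mul, enorm_inv (pow_ne_zero 2 hne), enorm_pow, hℂ,
    ENNReal.inv_pow]
  exact le_of_eq (by ring)

/-- Inequality (eq. b25) of the paper: for `b ∈ BMO(ℝ)` and bounded `C¹` functions
`f₁, f₂` with `f₁′, f₂′ ∈ L²`, pointwise
`|∫ (b(y) − avg_x^y b)(f₁(x)−f₁(y))(f₂(x)−f₂(y))/(x−y)² dy| ≤ C ‖b‖_{BMO} ‖f₁′‖_{L²} ‖f₂′‖_{L²}`. -/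
theorem bmo_quartic_inequality_b25 :
    ∃ C > (0 : ℝ), ∀ (b : ℝ → ℝ) (f₁ f₂ : ℝ → ℂ),
      LocallyIntegrable b volume → HasFiniteBMO b →
      ContDiff ℝ 1 f₁ → (∃ M, ∀ x, ‖f₁ x‖ ≤ M) → MemLp (deriv f₁) 2 volume →
      ContDiff ℝ 1 f₂ → (∃ M, ∀ x, ‖f₂ x‖ ≤ M) → MemLp (deriv f₂) 2 volume →
      ∀ x : ℝ,
        ‖∫ y : ℝ, ((b y - intervalAvg b x y : ℝ) : ℂ) *
            ((f₁ x - f₁ y) * (f₂ x - f₂ y) / ((x - y : ℝ) : ℂ) ^ 2)‖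
          ≤ C * bmoSeminorm b * (eLpNorm (deriv f₁) 2 volume).toReal *
              (eLpNorm (deriv f₂) 2 volume).toReal := by
  refine ⟨48, by norm_num, fun b f₁ f₂ hloc hb hf₁ _ hf₁' hf₂ _ hf₂' x => ?_⟩
  have bound := (enorm_integral_le_lintegral_enorm _).trans
    ((lintegral_mono fun y => enorm_ofReal_mul_sub_mul_sub_div_sq_le _ f₁ f₂ x y).trans
      (lintegral_enorm_sub_intervalAvg_mul_slope_mul_slope_le hloc hb hf₁ hf₂ x))
  have finite : ENNReal.ofReal (48 * bmoSeminorm b) * eLpNorm (deriv f₁) 2 volume *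
      eLpNorm (deriv f₂) 2 volume ≠ ∞ :=
    ENNReal.mul_ne_top (ENNReal.mul_ne_top ENNReal.ofReal_ne_top hf₁'.2.ne) hf₂'.2.ne
  refine (toReal_enorm _).symm.le.trans ((ENNReal.toReal_mono finite bound).trans_eq ?_)
  rw [ENNReal.toReal_mul, ENNReal.toReal_mul,
    ENNReal.toReal_ofReal (mul_nonneg (by norm_num) (bmoSeminorm_nonneg hb))]
end
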